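/- For any x ∈ ℝⁿ and σ > 0, every element y of the minimizer set of y ↦ σ‖y‖₀ + (1/2)‖y − x‖² satisfies: for each coordinate i, either y_i = 0 or y_i = x_i with |x_i| ≥ √(2σ); consequently ‖y‖₀ ≤ ‖x‖₀ (the hard-thresholding operator never increases the number of nonzero entries). -/

import Mathlib

open scoped Classical

/-- The ℓ₀ "norm": number of nonzero components. -/
noncomputable def l0norm {n : ℕ} (y : EuclideanSpace ℝ (Fin n)) : ℕ :=
  (Finset.univ.filter fun i => y i ≠ 0).card

/-!
Both terms of the objective split over coordinates, so a minimizer minimizes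
`t ↦ σ [t ≠ 0] + (t - xᵢ)² / 2` in every coordinate. A nonzero minimizer must then be `xᵢ`
(which in particular is nonzero), and comparing it with `t = 0` gives `2σ ≤ xᵢ²`.
-/

open Finset

theorem apply_le_of_forall_sum_le {ι β M : Type*} [Fintype ι] [DecidableEq ι]
    [AddCommMonoid M] [PartialOrder M] [IsOrderedCancelAddMonoid M]
    (f : ι → β → M) {y : ι → β} (hy : ∀ z : ι → β, ∑ j, f j (y j) ≤ ∑ j, f j (z j))
    (i : ι) (c : β) : f i (y i) ≤ f i c := by
  have h := hy (Function.update y i c)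
  have hrest :
      ∑ j ∈ univ.erase i, f j (Function.update y i c j) = ∑ j ∈ univ.erase i, f j (y j) :=
    sum_congr rfl fun j hj => by rw [Function.update_of_ne (ne_of_mem_erase hj)]
  rw [← add_sum_erase _ _ (mem_univ i), ← add_sum_erase _ _ (mem_univ i), hrest,
    Function.update_self] at h
  exact le_of_add_le_add_right h

noncomputable def l0ProxObjective (σ a t : ℝ) : ℝ :=
  (if t ≠ 0 then σ else 0) + (t - a) ^ 2 / 2

theorem l0ProxObjective_zero (σ a : ℝ) : l0ProxObjective σ a 0 = a ^ 2 / 2 := by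
  simp [l0ProxObjective]

theorem l0ProxObjective_of_ne_zero {t : ℝ} (σ a : ℝ) (ht : t ≠ 0) :
    l0ProxObjective σ a t = σ + (t - a) ^ 2 / 2 := by
  simp [l0ProxObjective, ht]

theorem mul_l0norm_add_norm_sub_sq_div_two_eq_sum {n : ℕ} (σ : ℝ)
    (x z : EuclideanSpace ℝ (Fin n)) :
    σ * (l0norm z : ℝ) + ‖z - x‖ ^ 2 / 2 = ∑ j, l0ProxObjective σ (x j) (z j) := by
  rw [l0norm, card_filter, EuclideanSpace.norm_eq, Real.sq_sqrt (by positivity)]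
  simp only [Nat.cast_sum, Nat.cast_ite, Nat.cast_one, Nat.cast_zero, mul_sum, sum_div,
    ← sum_add_distrib, PiLp.sub_apply, Real.norm_eq_abs, sq_abs, l0ProxObjective, mul_ite,
    mul_one, mul_zero]

theorem eq_of_forall_l0ProxObjective_le {σ a t : ℝ}
    (ht : ∀ c, l0ProxObjective σ a t ≤ l0ProxObjective σ a c) (ht0 : t ≠ 0) : t = a := by
  by_cases ha : a = 0
  · -- no nonzero `t` minimizes `t²/2`: halving it strictly decreases the objective
    have h := ht (t / 2)
    rw [l0ProxObjective_of_ne_zero _ _ ht0, l0ProxObjective_of_ne_zero _ _ (by simpa)] at h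
    subst ha
    have : 0 < t ^ 2 := by positivity
    nlinarith
  · have h := ht a
    rw [l0ProxObjective_of_ne_zero _ _ ht0, l0ProxObjective_of_ne_zero _ _ ha] at h
    have hsq : (t - a) ^ 2 = 0 := by nlinarith [sq_nonneg (t - a)]
    exact sub_eq_zero.mp (pow_eq_zero_iff two_ne_zero |>.mp hsq)

theorem sqrt_two_mul_le_abs_of_forall_l0ProxObjective_le {σ a : ℝ}
    (ha : ∀ c, l0ProxObjective σ a a ≤ l0ProxObjective σ a c) (ha0 : a ≠ 0) :
    √(2 * σ) ≤ |a| := by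
  have h := ha 0
  rw [l0ProxObjective_of_ne_zero _ _ ha0, l0ProxObjective_zero] at h
  rw [← Real.sqrt_sq_eq_abs]
  exact Real.sqrt_le_sqrt (by linarith)

theorem l0norm_le_l0norm {n : ℕ} {x y : EuclideanSpace ℝ (Fin n)} (h : ∀ i, y i ≠ 0 → x i ≠ 0) :
    l0norm y ≤ l0norm x :=
  card_le_card fun i => by simpa using h i

theorem hard_thresholding_properties_general {n : ℕ} (σ : ℝ)
    (x y : EuclideanSpace ℝ (Fin n))
    (hy : ∀ z : EuclideanSpace ℝ (Fin n),
      σ * (l0norm y : ℝ) + ‖y - x‖ ^ 2 / 2 ≤ σ * (l0norm z : ℝ) + ‖z - x‖ ^ 2 / 2) :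
    (∀ i : Fin n, y i = 0 ∨ (y i = x i ∧ Real.sqrt (2 * σ) ≤ |x i|)) ∧
    l0norm y ≤ l0norm x := by
  have hmin (i : Fin n) (c : ℝ) : l0ProxObjective σ (x i) (y i) ≤ l0ProxObjective σ (x i) c :=
    apply_le_of_forall_sum_le (fun j => l0ProxObjective σ (x j)) (fun z => by
      simpa only [mul_l0norm_add_norm_sub_sq_div_two_eq_sum, WithLp.ofLp_toLp]
        using hy (WithLp.toLp 2 z)) i c
  have hcoord (i : Fin n) : y i = 0 ∨ (y i = x i ∧ √(2 * σ) ≤ |x i|) := by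
    by_cases hyi : y i = 0
    · exact .inl hyi
    have hxy := eq_of_forall_l0ProxObjective_le (hmin i) hyi
    rw [hxy] at hyi
    exact .inr ⟨hxy, sqrt_two_mul_le_abs_of_forall_l0ProxObjective_le (hxy ▸ hmin i) hyi⟩
  refine ⟨hcoord, l0norm_le_l0norm fun i hi => ?_⟩
  rcases hcoord i with h | ⟨h, -⟩
  exacts [absurd h hi, h ▸ hi]

theorem hard_thresholding_properties {n : ℕ} (σ : ℝ) (hσ : 0 < σ)
    (x y : EuclideanSpace ℝ (Fin n))
    (hy : ∀ z : EuclideanSpace ℝ (Fin n),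
      σ * (l0norm y : ℝ) + ‖y - x‖ ^ 2 / 2 ≤ σ * (l0norm z : ℝ) + ‖z - x‖ ^ 2 / 2) :
    (∀ i : Fin n, y i = 0 ∨ (y i = x i ∧ Real.sqrt (2 * σ) ≤ |x i|)) ∧
    l0norm y ≤ l0norm x :=
  hard_thresholding_properties_general σ x y hy
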